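/- arXiv:cs/0501075 — 2 statements merged into one kernel-verified Lean document; each statement's English description precedes it below -/
import Mathlib

section
/- Let n, ℓ, L ≥ 1 be integers, ε > 0, and let C_2 : {0,1}^{ℓn} × {0,1}^{ℓn} × ({0,1}^{ℓn})^{L−1} → ZMod 2. Then there exists a function C_1 : ({0,1}^{ℓn})^L → Finset({0,1}^{ℓn}) all of whose output sets have size at most 1/ε², such that for every permutation R of {0,1}^{ℓn} that is the ℓ-direct product of a permutation of {0,1}^n: if Pr_{x̄,r}(C_2(R(x̄), r, (R²(x̄), …, R^L(x̄))) = b(x̄,r)) > 1/2 + ε, where x̄ and r are uniform on {0,1}^{ℓn}, then for at least ε·2^{ℓn} strings x̄ ∈ {0,1}^{ℓn} it holds that x̄ ∈ C_1(R(x̄), R²(x̄), …, R^L(x̄)). -/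
open scoped Classical

abbrev Str (k : ℕ) : Type := Fin k → ZMod 2

/-- inner product mod 2 of two block-strings in `({0,1}^n)^ℓ ≅ {0,1}^{ℓn}` -/
def ipb {ℓ n : ℕ} (x r : Fin ℓ → Str n) : ZMod 2 := ∑ i, ∑ j, x i j * r i j

/-- fraction of elements of a finite type satisfying `p` (probability under uniform distribution) -/
noncomputable def fr {α : Type} [Fintype α] (p : α → Prop) : ℝ :=
  ((Finset.univ.filter p).card : ℝ) / (Fintype.card α : ℝ)

/-!
`C₁(v)` is the list of all `x` whose Hadamard codeword `r ↦ ⟨x, r⟩` agrees with the predictor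
`r ↦ C₂(v₀, r, v₁, …)` on at least a `1/2 + ε/2` fraction of the `r`. Parseval's identity for the
characters `x ↦ (-1)^⟨x, t⟩` of `(ZMod 2)^{ℓn}` shows that such a list has at most `1/ε²`
elements. Feeding `v = (R x, …, R^L x)` turns the predictor into the one of the hypothesis, whose
success rates over `r`, averaged over `x`, exceed `1/2 + ε`; by a reverse Markov argument at least
an `ε`-fraction of the `x` have success rate at least `1/2 + ε/2`, i.e. lie in their own list.
-/

open Finset

section Fraction

variable {α β : Type} [Fintype α] [Fintype β]

lemma fr_le_one (p : α → Prop) : fr p ≤ 1 :=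
  div_le_one_of_le₀ (by exact_mod_cast card_le_univ _) (Nat.cast_nonneg _)

lemma fr_mul_card (p : α → Prop) [DecidablePred p] : fr p * Fintype.card α = #{x | p x} := by
  rcases isEmpty_or_nonempty α with hα | hα
  · simp [fr, univ_eq_empty]
  · rw [fr, div_mul_cancel₀ _ (by exact_mod_cast Fintype.card_ne_zero)]
    congr

lemma fr_prod (p : α × β → Prop) :
    fr p = (∑ x, fr fun y => p (x, y)) / Fintype.card α := by
  have hcount : #{q | p q} = ∑ x, #{y | p (x, y)} := by
    simp only [card_filter, Fintype.sum_prod_type]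
  simp only [fr, hcount, Fintype.card_prod, ← sum_div]
  push_cast
  rw [div_div, mul_comm]

lemma le_card_filter_of_lt_mean {g : α → ℝ} (hg : ∀ x, g x ≤ 1) {ε : ℝ}
    (h : 1 / 2 + ε < (∑ x, g x) / Fintype.card α) :
    ε * Fintype.card α ≤ #{x | 1 / 2 + ε / 2 ≤ g x} := by
  rcases (Fintype.card α).eq_zero_or_pos with hN | hN
  · simp [hN]
  rw [lt_div_iff₀ (by exact_mod_cast hN)] at h
  have hS : (#{x | 1 / 2 + ε / 2 ≤ g x} : ℝ) ≤ Fintype.card α := by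
    exact_mod_cast card_le_univ _
  have hsum : ∑ x, g x ≤ #{x | 1 / 2 + ε / 2 ≤ g x} +
      (Fintype.card α - #{x | 1 / 2 + ε / 2 ≤ g x}) * (1 / 2 + ε / 2) := by
    have hcompl : (#{x | ¬ 1 / 2 + ε / 2 ≤ g x} : ℝ) =
        Fintype.card α - #{x | 1 / 2 + ε / 2 ≤ g x} := by
      rw [eq_sub_iff_add_eq, add_comm, ← card_univ]
      exact_mod_cast card_filter_add_card_filter_not (s := univ) (fun x => 1 / 2 + ε / 2 ≤ g x)
    rw [← sum_filter_add_sum_filter_not univ (fun x => 1 / 2 + ε / 2 ≤ g x), ← hcompl]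
    gcongr
    · simpa using sum_le_card_nsmul _ g 1 fun x _ => hg x
    · simpa using sum_le_card_nsmul _ g _ fun x hx => le_of_lt (not_le.1 (mem_filter.1 hx).2)
  have hs : (0 : ℝ) ≤ #{x | 1 / 2 + ε / 2 ≤ g x} := Nat.cast_nonneg _
  rcases le_or_gt ε 0 with hε | hε
  · nlinarith
  · nlinarith [mul_nonneg hε.le hs]

end Fraction

noncomputable def signChar : AddChar (ZMod 2) ℝ where
  toFun a := if a = 0 then 1 else -1
  map_zero_eq_one' := if_pos rfl
  map_add_eq_mul' a b := by
    have zmod_two_cases (c : ZMod 2) : c = 0 ∨ c = 1 := by decide +revert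
    rcases zmod_two_cases a with rfl | rfl <;> rcases zmod_two_cases b with rfl | rfl <;>
      simp [CharTwo.add_self_eq_zero]

lemma signChar_add (a b : ZMod 2) : signChar (a + b) = if a = b then 1 else -1 := by
  simp only [signChar, AddChar.coe_mk, add_eq_zero_iff_eq_neg, ZMod.neg_eq_self_mod_two]

lemma signChar_eq_one_iff {a : ZMod 2} : signChar a = 1 ↔ a = 0 := by
  by_cases ha : a = 0 <;> simp [signChar, ha]
  norm_num

lemma signChar_sq (a : ZMod 2) : signChar a ^ 2 = 1 := by
  rw [sq, ← AddChar.map_add_eq_mul, CharTwo.add_self_eq_zero, AddChar.map_zero_eq_one]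

section Hadamard

variable {ℓ n : ℕ}

lemma ipb_add_left (x y r : Fin ℓ → Str n) : ipb (x + y) r = ipb x r + ipb y r := by
  simp [ipb, add_mul, sum_add_distrib]

lemma ipb_add_right (x r s : Fin ℓ → Str n) : ipb x (r + s) = ipb x r + ipb x s := by
  simp [ipb, mul_add, sum_add_distrib]

lemma ipb_single_left (i : Fin ℓ) (j : Fin n) (t : Fin ℓ → Str n) :
    ipb (Pi.single i (Pi.single j 1)) t = t i j := by
  rw [ipb, sum_eq_single i, sum_eq_single j] <;> simp_all [Pi.single_apply]

lemma eq_zero_of_forall_ipb_eq_zero {t : Fin ℓ → Str n} (h : ∀ x, ipb x t = 0) : t = 0 := by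
  funext i j
  simpa [ipb_single_left] using h (Pi.single i (Pi.single j 1))

lemma neg_eq_self_str (r : Fin ℓ → Str n) : -r = r :=
  funext fun i => funext fun j => ZMod.neg_eq_self_mod_two (r i j)

lemma add_eq_zero_iff_eq_str {r s : Fin ℓ → Str n} : r + s = 0 ↔ s = r := by
  rw [add_eq_zero_iff_neg_eq, neg_eq_self_str, eq_comm]

noncomputable def hadamardChar (t : Fin ℓ → Str n) : AddChar (Fin ℓ → Str n) ℝ :=
  signChar.compAddMonoidHom (AddMonoidHom.mk' (fun x => ipb x t) fun x y => ipb_add_left x y t)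

lemma hadamardChar_apply (t x : Fin ℓ → Str n) : hadamardChar t x = signChar (ipb x t) := rfl

lemma hadamardChar_add (r s x : Fin ℓ → Str n) :
    hadamardChar (r + s) x = hadamardChar r x * hadamardChar s x := by
  simp only [hadamardChar_apply, ipb_add_right, AddChar.map_add_eq_mul]

lemma hadamardChar_eq_zero_iff {t : Fin ℓ → Str n} : hadamardChar t = 0 ↔ t = 0 := by
  refine ⟨fun h => eq_zero_of_forall_ipb_eq_zero fun x => ?_, ?_⟩
  · rw [← signChar_eq_one_iff, ← hadamardChar_apply, h, AddChar.zero_apply]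
  · rintro rfl
    ext x
    simp [hadamardChar_apply, ipb]

lemma sum_hadamardChar (t : Fin ℓ → Str n) :
    ∑ x, hadamardChar t x = if t = 0 then (Fintype.card (Fin ℓ → Str n) : ℝ) else 0 := by
  simp only [AddChar.sum_eq_ite, hadamardChar_eq_zero_iff]

theorem sum_sq_sum_mul_hadamardChar (g : (Fin ℓ → Str n) → ℝ) :
    ∑ x, (∑ r, g r * hadamardChar r x) ^ 2 =
      Fintype.card (Fin ℓ → Str n) * ∑ r, g r ^ 2 := by
  calc ∑ x, (∑ r, g r * hadamardChar r x) ^ 2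
      = ∑ r, ∑ s, g r * g s * ∑ x, hadamardChar (r + s) x := by
        simp_rw [sq, sum_mul_sum, mul_sum, hadamardChar_add]
        rw [sum_comm]
        refine sum_congr rfl fun r _ => ?_
        rw [sum_comm]
        refine sum_congr rfl fun s _ => sum_congr rfl fun x _ => by ring
    _ = ∑ r, ∑ s, if s = r then g r * g s * Fintype.card (Fin ℓ → Str n) else 0 := by
        simp_rw [sum_hadamardChar, add_eq_zero_iff_eq_str, mul_ite, mul_zero]
    _ = Fintype.card (Fin ℓ → Str n) * ∑ r, g r ^ 2 := by
        simp_rw [sum_ite_eq', mem_univ, if_true, mul_sum, sq]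
        exact sum_congr rfl fun r _ => by ring

lemma sum_signChar_mul_hadamardChar (f : (Fin ℓ → Str n) → ZMod 2) (x : Fin ℓ → Str n) :
    ∑ r, signChar (f r) * hadamardChar r x =
      (2 * fr (fun r => f r = ipb x r) - 1) * Fintype.card (Fin ℓ → Str n) := by
  have hterm (r : Fin ℓ → Str n) : signChar (f r) * hadamardChar r x =
      2 * (if f r = ipb x r then 1 else 0) - 1 := by
    rw [hadamardChar_apply, ← AddChar.map_add_eq_mul, signChar_add]
    split_ifs <;> norm_num
  simp_rw [hterm, sub_mul, mul_assoc, fr_mul_card, sum_sub_distrib, ← mul_sum, sum_boole]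
  simp

noncomputable def hadamardList (f : (Fin ℓ → Str n) → ZMod 2) (δ : ℝ) : Finset (Fin ℓ → Str n) :=
  {x | 1 / 2 + δ ≤ fr (fun r => f r = ipb x r)}

theorem card_hadamardList_le (f : (Fin ℓ → Str n) → ZMod 2) {δ : ℝ} (hδ : 0 < δ) :
    (#(hadamardList f δ) : ℝ) ≤ 1 / (2 * δ) ^ 2 := by
  set N : ℝ := (Fintype.card (Fin ℓ → Str n) : ℝ)
  have hN : 0 < N := Nat.cast_pos.2 Fintype.card_pos
  set corr : (Fin ℓ → Str n) → ℝ := fun x => ∑ r, signChar (f r) * hadamardChar r x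
  have hcorr : ∀ x ∈ hadamardList f δ, 2 * δ * N ≤ corr x := by
    intro x hx
    simp only [hadamardList, mem_filter, mem_univ, true_and] at hx
    simp only [corr, sum_signChar_mul_hadamardChar]
    nlinarith
  have hparseval : ∑ x, corr x ^ 2 = N ^ 2 := by
    simp only [corr]
    rw [sum_sq_sum_mul_hadamardChar]
    simp only [signChar_sq, sum_const, card_univ, nsmul_eq_mul, mul_one, N]
    ring
  have key : #(hadamardList f δ) * (2 * δ * N) ^ 2 ≤ N ^ 2 := calc
    #(hadamardList f δ) * (2 * δ * N) ^ 2 = ∑ x ∈ hadamardList f δ, (2 * δ * N) ^ 2 := by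
        rw [sum_const, nsmul_eq_mul]
    _ ≤ ∑ x ∈ hadamardList f δ, corr x ^ 2 := by
        gcongr with x hx
        exact hcorr x hx
    _ ≤ ∑ x, corr x ^ 2 := sum_le_univ_sum_of_nonneg fun x => sq_nonneg _
    _ = N ^ 2 := hparseval
  rw [le_div_iff₀ (by positivity)]
  rw [mul_pow, ← mul_assoc] at key
  exact le_of_mul_le_mul_right (key.trans_eq (one_mul _).symm) (pow_pos hN 2)

end Hadamard

theorem stmt9_general (n ℓ L : ℕ) (hL : 1 ≤ L) (ε : ℝ) (hε : 0 < ε)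
    (C2 : (Fin ℓ → Str n) → (Fin ℓ → Str n) →
      (Fin (L - 1) → (Fin ℓ → Str n)) → ZMod 2) :
    ∃ C1 : (Fin L → (Fin ℓ → Str n)) → Finset (Fin ℓ → Str n),
      (∀ v, ((C1 v).card : ℝ) ≤ 1 / ε ^ 2) ∧
      ∀ R : Equiv.Perm (Fin ℓ → Str n),
        (∃ R₀ : Equiv.Perm (Str n), ∀ x i, R x i = R₀ (x i)) →
        1 / 2 + ε < fr (fun p : (Fin ℓ → Str n) × (Fin ℓ → Str n) =>
            C2 (R p.1) p.2
              (fun j : Fin (L - 1) => (R ^ ((j : ℕ) + 2)) p.1) = ipb p.1 p.2) →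
        ε * 2 ^ (ℓ * n) ≤
          ((Finset.univ.filter (fun x : Fin ℓ → Str n =>
            x ∈ C1 (fun j : Fin L => (R ^ ((j : ℕ) + 1)) x))).card : ℝ) := by
  let F (v : Fin L → (Fin ℓ → Str n)) (r : Fin ℓ → Str n) : ZMod 2 :=
    C2 (v ⟨0, hL⟩) r fun j => v ⟨j + 1, by omega⟩
  refine ⟨fun v => hadamardList (F v) (ε / 2), fun v => ?_, ?_⟩
  · have := card_hadamardList_le (F v) (half_pos hε)
    rwa [mul_div_cancel₀ ε two_ne_zero] at this
  rintro R - hR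
  rw [fr_prod] at hR
  have hcard : (Fintype.card (Fin ℓ → Str n) : ℝ) = 2 ^ (ℓ * n) := by
    simp [pow_mul']
  rw [← hcard]
  have hmem (x : Fin ℓ → Str n) :
      x ∈ hadamardList (F fun j => (R ^ ((j : ℕ) + 1)) x) (ε / 2) ↔
        1 / 2 + ε / 2 ≤ fr fun r => C2 (R x) r (fun j => (R ^ ((j : ℕ) + 2)) x) = ipb x r := by
    simp [hadamardList, F]
  simp_rw [hmem]
  exact le_card_filter_of_lt_mean (fun x => fr_le_one _) hR

theorem stmt9 (n ℓ L : ℕ) (hn : 1 ≤ n) (hℓ : 1 ≤ ℓ) (hL : 1 ≤ L) (ε : ℝ) (hε : 0 < ε)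
    (C2 : (Fin ℓ → Str n) → (Fin ℓ → Str n) →
      (Fin (L - 1) → (Fin ℓ → Str n)) → ZMod 2) :
    ∃ C1 : (Fin L → (Fin ℓ → Str n)) → Finset (Fin ℓ → Str n),
      (∀ v, ((C1 v).card : ℝ) ≤ 1 / ε ^ 2) ∧
      ∀ R : Equiv.Perm (Fin ℓ → Str n),
        (∃ R₀ : Equiv.Perm (Str n), ∀ x i, R x i = R₀ (x i)) →
        1 / 2 + ε < fr (fun p : (Fin ℓ → Str n) × (Fin ℓ → Str n) =>
            C2 (R p.1) p.2
              (fun j : Fin (L - 1) => (R ^ ((j : ℕ) + 2)) p.1) = ipb p.1 p.2) →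
        ε * 2 ^ (ℓ * n) ≤
          ((Finset.univ.filter (fun x : Fin ℓ → Str n =>
            x ∈ C1 (fun j : Fin L => (R ^ ((j : ℕ) + 1)) x))).card : ℝ) :=
  stmt9_general n ℓ L hL ε hε C2
end

section
/- Let n, ℓ ≥ 1 and m ≥ 2 be integers, ε > 0, and let D ⊆ {0,1}^m. Then there exist K = 2^{m+2} − 4 functions C_1, …, C_K : (ZMod 2)^{m−1} → ZMod 2 with the following property. For X : {0,1}^n → {0,1}^n with ℓ-direct product X̄, define E(X,(x̄,r)) = (b(X̄(x̄),r), b(X̄(x̄+1),r), …, b(X̄(x̄+m−1),r)) for x̄ ∈ ({0,1}^n)^ℓ and r ∈ {0,1}^{ℓn}. If |Pr_{x̄,r}(E(X,(x̄,r)) ∈ D) − |D|/2^m| > ε (x̄ uniform on ({0,1}^n)^ℓ, r uniform on {0,1}^{ℓn}), then there exists i ∈ {1,…,K} such that Pr_{x̄,r}(C_i(b(X̄(x̄−m+1),r), b(X̄(x̄−m+2),r), …, b(X̄(x̄−1),r)) = b(X̄(x̄),r)) ≥ 1/2 + ε/m. -/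
open scoped Classical

/-- little-endian identification of `{0,1}^n` with `Fin (2^n)` -/
def strToFin (n : ℕ) (x : Str n) : Fin (2 ^ n) :=
  ⟨∑ j : Fin n, (x j).val * 2 ^ (j : ℕ), by
    have hgeom : ∀ M : ℕ, (∑ j ∈ Finset.range M, 2 ^ j) < 2 ^ M := by
      intro M
      induction M with
      | zero => simp
      | succ K ih =>
        rw [Finset.sum_range_succ, pow_succ]
        omega
    calc ∑ j : Fin n, (x j).val * 2 ^ (j : ℕ)
        ≤ ∑ j : Fin n, 1 * 2 ^ (j : ℕ) := by
          refine Finset.sum_le_sum fun j _ => Nat.mul_le_mul_right _ ?_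
          exact Nat.lt_succ_iff.mp (ZMod.val_lt (x j))
      _ = ∑ j ∈ Finset.range n, 2 ^ j := by
          simp only [one_mul]
          exact Fin.sum_univ_eq_sum_range (fun j => 2 ^ j) n
      _ < 2 ^ n := hgeom n⟩

/-- inverse identification of `Fin (2^n)` with `{0,1}^n` -/
def finToStr (n : ℕ) (v : Fin (2 ^ n)) : Str n :=
  fun j => (((v : ℕ) / 2 ^ (j : ℕ)) % 2 : ℕ)

/-- addition of an integer constant modulo `2^n`, on `{0,1}^n` identified with `ZMod (2^n)` -/
def shiftStr (n : ℕ) (x : Str n) (k : ℤ) : Str n :=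
  haveI : NeZero (2 ^ n) := ⟨(by positivity : (0:ℕ) < 2 ^ n).ne'⟩
  finToStr n ⟨(((strToFin n x : ℕ) : ZMod (2 ^ n)) + (k : ZMod (2 ^ n))).val, ZMod.val_lt _⟩

/-!
Yao's hybrid argument. Let `H_j` be the word whose first `j` letters are the bits
`b(X̄(x̄),r), …, b(X̄(x̄+j-1),r)` and whose remaining letters are uniform, and let
`q_j = Pr[H_j ∈ D]`. Then `q_0 = |D|/2^m` and `q_m` is the probability in the hypothesis, so some
`|q_{j+1} - q_j|` exceeds `ε/m`. Guessing bit `j` as a uniform letter `g`, kept if the word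
(known prefix, `g`, uniform filler) lands in `D` and flipped otherwise, is right with probability
`1/2 + q_{j+1} - q_j`. Fixing the best `g` and filler, negating the output if needed, and shifting
`x̄` by `j` (which preserves the uniform distribution) gives a predictor of `b(X̄(x̄),r)` from the
`m - 1` preceding bits. For each `j < m` there are `2^(m-j+1)` such predictors, `2^(m+2) - 4` in all.
-/
section Frequency

variable {α β : Type} [Fintype α] [Fintype β]

lemma fr_eq_card_subtype (p : α → Prop) :
    fr p = (Fintype.card {a // p a} : ℝ) / Fintype.card α := by
  rw [fr, Fintype.card_subtype]

lemma fr_eq_card_filter (p : α → Prop) [DecidablePred p] :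
    fr p = (Finset.univ.filter p).card / Fintype.card α := by
  rw [fr]
  congr

lemma fr_congr {p q : α → Prop} (h : ∀ a, p a ↔ q a) : fr p = fr q :=
  congrArg fr (funext fun a => propext (h a))

lemma fr_comp_equiv (e : α ≃ β) (p : β → Prop) : fr (fun a => p (e a)) = fr p := by
  rw [fr_eq_card_subtype, fr_eq_card_subtype, Fintype.card_congr (e.subtypeEquiv fun _ => Iff.rfl),
    Fintype.card_congr e]

lemma fr_not [Nonempty α] (p : α → Prop) : fr (fun a => ¬ p a) = 1 - fr p := by
  have hα : (Fintype.card α : ℝ) ≠ 0 := Nat.cast_ne_zero.mpr Fintype.card_ne_zero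
  rw [fr_eq_card_subtype, fr_eq_card_subtype, Fintype.card_subtype_compl,
    Nat.cast_sub (Fintype.card_subtype_le p)]
  field_simp

lemma fr_mem (s : Finset α) : fr (· ∈ s) = s.card / Fintype.card α := by
  rw [fr_eq_card_filter, Finset.filter_mem_eq_inter, Finset.univ_inter]

lemma fr_prod_eq_sum_div (P : α × β → Prop) :
    fr P = (∑ b, fr fun a => P (a, b)) / Fintype.card β := by
  simp only [fr, Finset.card_filter, Fintype.card_prod, ← Finset.sum_div, Nat.cast_mul,
    Fintype.sum_prod_type_right, Nat.cast_sum]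
  rw [div_div, mul_comm]

lemma fr_prod_fst [Nonempty β] (p : α → Prop) : fr (fun x : α × β => p x.1) = fr p := by
  have hβ : (Fintype.card β : ℝ) ≠ 0 := Nat.cast_ne_zero.mpr Fintype.card_ne_zero
  simp only [fr_prod_eq_sum_div, Finset.sum_const, Finset.card_univ, nsmul_eq_mul]
  field_simp

lemma fr_prod_snd [Nonempty α] (p : β → Prop) : fr (fun x : α × β => p x.2) = fr p := by
  rw [← fr_prod_fst (β := α) p, ← fr_comp_equiv (Equiv.prodComm α β)]
  rfl

lemma exists_le_fr_section [Nonempty β] (P : α × β → Prop) :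
    ∃ b, fr P ≤ fr fun a => P (a, b) := by
  have hβ : (Fintype.card β : ℝ) ≠ 0 := Nat.cast_ne_zero.mpr Fintype.card_ne_zero
  obtain ⟨b, -, hb⟩ := Finset.exists_le_of_sum_le Finset.univ_nonempty
    (f := fun _ => fr P) (g := fun b => fr fun a => P (a, b)) <| by
      rw [Finset.sum_const, Finset.card_univ, nsmul_eq_mul, fr_prod_eq_sum_div]
      field_simp
      rfl
  exact ⟨b, hb⟩

end Frequency

lemma two_mul_sum_add_two_mul_sum_of_pair {ι : Type} [Fintype ι] (e : ι ≃ ι) {F G H : ι → ℕ}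
    (h : ∀ i, F i + F (e i) + G i + G (e i) = 1 + H i + H (e i)) :
    2 * ∑ i, F i + 2 * ∑ i, G i = Fintype.card ι + 2 * ∑ i, H i := by
  have hsum := Finset.sum_congr rfl fun i (_ : i ∈ Finset.univ) => h i
  simp only [Finset.sum_add_distrib, Equiv.sum_comp, Finset.sum_const, Finset.card_univ,
    smul_eq_mul, mul_one] at hsum
  omega

lemma exists_lt_abs_sub_succ {f : ℕ → ℝ} {m : ℕ} (hm : 0 < m) {ε : ℝ}
    (h : ε < |f m - f 0|) : ∃ j < m, ε / m < |f (j + 1) - f j| := by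
  by_contra! hsmall
  have : |f m - f 0| ≤ m * (ε / m) := by
    rw [← Finset.sum_range_sub]
    refine (Finset.abs_sum_le_sum_abs _ _).trans ?_
    simpa using Finset.sum_le_card_nsmul _ _ _ fun j hj => hsmall j (Finset.mem_range.mp hj)
  rw [mul_div_cancel₀ _ (by positivity)] at this
  linarith

lemma ZMod.two_add_one_eq_iff {a b : ZMod 2} : a + 1 = b ↔ a ≠ b := by
  revert a b; decide

section NextBit

variable {m : ℕ}

def hybrid (j : ℕ) (w u : Str m) : Str m := fun k => if (k : ℕ) < j then w k else u k

lemma hybrid_zero (w u : Str m) : hybrid 0 w u = u := by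
  funext k
  simp [hybrid]

lemma hybrid_self (w u : Str m) : hybrid m w u = w := by
  funext k
  simp [hybrid]

lemma hybrid_congr {j : ℕ} {w w' u u' : Str m} (hw : ∀ k : Fin m, (k : ℕ) < j → w k = w' k)
    (hu : ∀ k : Fin m, j ≤ k → u k = u' k) : hybrid j w u = hybrid j w' u' := by
  funext k
  unfold hybrid
  split_ifs with hk
  exacts [hw k hk, hu k (not_lt.mp hk)]

lemma hybrid_succ_of_eq {j : Fin m} {w u : Str m} (h : u j = w j) :
    hybrid (j + 1) w u = hybrid j w u := by
  funext k
  unfold hybrid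
  rcases lt_trichotomy (k : ℕ) j with hk | hk | hk
  · simp [hk, hk.trans (Nat.lt_succ_self _)]
  · simp [Fin.ext hk, h]
  · simp [hk.not_gt, (Nat.succ_le_of_lt hk).not_gt]

def nextBitGuess (D : Finset (Str m)) (j : Fin m) (u w : Str m) : ZMod 2 :=
  if hybrid j w u ∈ D then u j else u j + 1

lemma nextBitGuess_eq_iff {D : Finset (Str m)} {j : Fin m} {u w : Str m} :
    nextBitGuess D j u w = w j ↔ (u j = w j ↔ hybrid j w u ∈ D) := by
  unfold nextBitGuess
  split_ifs with hD <;> simp [hD, ZMod.two_add_one_eq_iff]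

lemma nextBitGuess_congr {D : Finset (Str m)} {j : Fin m} {w w' u u' : Str m}
    (hw : ∀ k : Fin m, k < j → w k = w' k) (hu : ∀ k : Fin m, j ≤ k → u k = u' k) :
    nextBitGuess D j u w = nextBitGuess D j u' w' := by
  rw [nextBitGuess, nextBitGuess, hybrid_congr hw hu, hu j le_rfl]

/-- Exactly one of `u` and `u'` has the correct letter at `j`, and for that one the `j`- and
`(j+1)`-hybrids coincide. -/
lemma nextBitGuess_pair (D : Finset (Str m)) (j : Fin m) (w u : Str m) :
    let u' := u + Pi.single j 1
    (if nextBitGuess D j u w = w j then 1 else 0) + (if nextBitGuess D j u' w = w j then 1 else 0)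
      + (if hybrid j w u ∈ D then 1 else 0) + (if hybrid j w u' ∈ D then 1 else 0)
      = 1 + (if hybrid (j + 1) w u ∈ D then 1 else 0)
        + (if hybrid (j + 1) w u' ∈ D then (1 : ℕ) else 0) := by
  intro u'
  have hu'j : u' j = u j + 1 := by simp [u']
  have hsucc : hybrid (j + 1) w u' = hybrid (j + 1) w u :=
    hybrid_congr (fun _ _ => rfl) fun k hk => by
      simp [u', Fin.ext_iff, show (k : ℕ) ≠ j by omega]
  rw [hsucc]
  simp only [nextBitGuess_eq_iff, hu'j]
  rcases eq_or_ne (u j) (w j) with h | h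
  · rw [hybrid_succ_of_eq h, h]
    by_cases ha : hybrid j w u ∈ D <;> by_cases hb : hybrid j w u' ∈ D <;>
      simp [ha, hb]
  · have h' : u' j = w j := hu'j.trans (ZMod.two_add_one_eq_iff.mpr h)
    rw [← hsucc, hybrid_succ_of_eq h', ← hu'j, h']
    by_cases ha : hybrid j w u ∈ D <;> by_cases hb : hybrid j w u' ∈ D <;>
      simp [ha, hb, h]

end NextBit

section HybridArgument

variable {Ω : Type} [Fintype Ω] {m : ℕ}

noncomputable def hybridProb (Y : Ω → Str m) (D : Finset (Str m)) (j : ℕ) : ℝ :=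
  fr fun p : Ω × Str m => hybrid j (Y p.1) p.2 ∈ D

lemma hybridProb_zero [Nonempty Ω] (Y : Ω → Str m) (D : Finset (Str m)) :
    hybridProb Y D 0 = D.card / 2 ^ m := by
  simp only [hybridProb, hybrid_zero]
  rw [fr_prod_snd (· ∈ D), fr_mem, Fintype.card_fun, ZMod.card, Fintype.card_fin]
  push_cast
  rfl

lemma hybridProb_self (Y : Ω → Str m) (D : Finset (Str m)) :
    hybridProb Y D m = fr fun ω => Y ω ∈ D := by
  simp only [hybridProb, hybrid_self]
  exact fr_prod_fst (β := Str m) (Y · ∈ D)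

lemma fr_nextBitGuess_eq [Nonempty Ω] (Y : Ω → Str m) (D : Finset (Str m)) (j : Fin m) :
    fr (fun p : Ω × Str m => nextBitGuess D j p.2 (Y p.1) = Y p.1 j)
      = 1 / 2 + (hybridProb Y D (j + 1) - hybridProb Y D j) := by
  have hcount := two_mul_sum_add_two_mul_sum_of_pair (ι := Ω × Str m)
    ((Equiv.refl Ω).prodCongr (Equiv.addRight (Pi.single j 1)))
    (fun p => nextBitGuess_pair D j (Y p.1) p.2)
  simp only [← Finset.card_filter] at hcount
  have hcountℝ := congrArg (Nat.cast : ℕ → ℝ) hcount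
  push_cast at hcountℝ
  have hN : (Fintype.card (Ω × Str m) : ℝ) ≠ 0 := Nat.cast_ne_zero.mpr Fintype.card_ne_zero
  simp only [hybridProb, fr_eq_card_filter]
  field_simp
  linarith

end HybridArgument

theorem exists_nextBitGuess_advantage {Ω : Type} [Fintype Ω] [Nonempty Ω] {m : ℕ} (hm : 0 < m)
    (Y : Ω → Str m) (D : Finset (Str m)) {ε : ℝ}
    (h : ε < |fr (fun ω => Y ω ∈ D) - D.card / 2 ^ m|) :
    ∃ (j : Fin m) (u : Str m) (s : ZMod 2),
      1 / 2 + ε / m ≤ fr fun ω => s + nextBitGuess D j u (Y ω) = Y ω j := by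
  rw [← hybridProb_self, ← hybridProb_zero Y] at h
  obtain ⟨j, hj, hjump⟩ := exists_lt_abs_sub_succ hm h
  have hflip (p : Ω × Str m) : (1 + nextBitGuess D ⟨j, hj⟩ p.2 (Y p.1) = Y p.1 ⟨j, hj⟩)
      ↔ ¬ nextBitGuess D ⟨j, hj⟩ p.2 (Y p.1) = Y p.1 ⟨j, hj⟩ := by
    rw [add_comm, ZMod.two_add_one_eq_iff]
  obtain ⟨s, hs⟩ : ∃ s : ZMod 2, 1 / 2 + ε / m
      ≤ fr fun p : Ω × Str m => s + nextBitGuess D ⟨j, hj⟩ p.2 (Y p.1) = Y p.1 ⟨j, hj⟩ := by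
    have hfr := fr_nextBitGuess_eq Y D ⟨j, hj⟩
    rcases lt_abs.mp hjump with hpos | hneg
    · exact ⟨0, by simp only [zero_add, hfr]; linarith⟩
    · exact ⟨1, by rw [fr_congr hflip, fr_not, hfr]; linarith⟩
  exact ⟨⟨j, hj⟩, (exists_le_fr_section _).imp fun u hu => ⟨s, hs.trans hu⟩⟩

section ShiftModTwoPow

variable {n : ℕ}

lemma strToFin_finToStr (v : Fin (2 ^ n)) : strToFin n (finToStr n v) = v := by
  have hdigits (M : ℕ) : ∑ j ∈ Finset.range M, (v : ℕ) / 2 ^ j % 2 * 2 ^ j = v % 2 ^ M := by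
    induction M with
    | zero => simp [Nat.mod_one]
    | succ K ih => rw [Finset.sum_range_succ, ih, Nat.mod_pow_succ]; ring
  ext
  simp only [strToFin, finToStr, ZMod.val_natCast, Nat.mod_mod_of_dvd _ (dvd_refl 2)]
  rw [Fin.sum_univ_eq_sum_range (fun j => (v : ℕ) / 2 ^ j % 2 * 2 ^ j), hdigits,
    Nat.mod_eq_of_lt v.isLt]

lemma strToFin_injective : Function.Injective (strToFin n) :=
  (Function.LeftInverse.rightInverse_of_card_le strToFin_finToStr (by simp)).injective

lemma cast_strToFin_injective :
    Function.Injective fun x : Str n => ((strToFin n x : ℕ) : ZMod (2 ^ n)) := by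
  intro x y h
  apply strToFin_injective
  ext
  simpa [ZMod.natCast_eq_natCast_iff', Nat.mod_eq_of_lt] using h

lemma cast_strToFin_shiftStr (x : Str n) (k : ℤ) :
    ((strToFin n (shiftStr n x k) : ℕ) : ZMod (2 ^ n)) = (strToFin n x : ℕ) + k := by
  simp [shiftStr, strToFin_finToStr]

lemma shiftStr_zero (x : Str n) : shiftStr n x 0 = x :=
  cast_strToFin_injective (by simp [cast_strToFin_shiftStr])

lemma shiftStr_shiftStr (x : Str n) (a b : ℤ) :
    shiftStr n (shiftStr n x a) b = shiftStr n x (a + b) :=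
  cast_strToFin_injective (by simp [cast_strToFin_shiftStr, add_assoc])

def shiftStrEquiv (c : ℤ) : Str n ≃ Str n where
  toFun x := shiftStr n x c
  invFun x := shiftStr n x (-c)
  left_inv x := by simp [shiftStr_shiftStr, shiftStr_zero]
  right_inv x := by simp [shiftStr_shiftStr, shiftStr_zero]

end ShiftModTwoPow

section DirectProduct

variable {n ℓ : ℕ}

def shiftBlocks (c : ℤ) : (Fin ℓ → Str n) × (Fin ℓ → Str n) ≃ (Fin ℓ → Str n) × (Fin ℓ → Str n) :=
  (Equiv.piCongrRight fun _ => shiftStrEquiv c).prodCongr (Equiv.refl _)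

def shiftedInnerBit (X : Str n → Str n) (t : ℤ)
    (p : (Fin ℓ → Str n) × (Fin ℓ → Str n)) : ZMod 2 :=
  ipb (fun i => X (shiftStr n (p.1 i) t)) p.2

lemma shiftedInnerBit_shiftBlocks (X : Str n → Str n) (c t : ℤ)
    (p : (Fin ℓ → Str n) × (Fin ℓ → Str n)) :
    shiftedInnerBit X t (shiftBlocks c p) = shiftedInnerBit X (c + t) p := by
  simp [shiftedInnerBit, shiftBlocks, shiftStrEquiv, shiftStr_shiftStr]

lemma shiftedInnerBit_zero (X : Str n → Str n) (p : (Fin ℓ → Str n) × (Fin ℓ → Str n)) :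
    shiftedInnerBit X 0 p = ipb (fun i => X (p.1 i)) p.2 := by
  simp [shiftedInnerBit, shiftStr_zero]

end DirectProduct

section Predictors

/-- The position `j` of the predicted letter, the filler letters at `j, …, m - 1` (the first one
being the guess), and a flip of the output. -/
abbrev PredictorParam (m : ℕ) : Type := (j : Fin m) × (Fin (m - j) → ZMod 2) × ZMod 2

lemma card_predictorParam (m : ℕ) : Fintype.card (PredictorParam m) = 2 ^ (m + 2) - 4 := by
  have hsum (k : ℕ) : ∑ j : Fin k, 2 ^ (k - j) * 2 + 4 = 2 ^ (k + 2) := by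
    induction k with
    | zero => simp
    | succ k ih =>
      rw [Fin.sum_univ_succ]
      simp only [Fin.val_zero, Fin.val_succ, Nat.sub_zero, Nat.succ_sub_succ]
      have h1 : 2 ^ (k + 1) * 2 = 2 ^ (k + 2) := by ring
      have h2 : 2 ^ (k + 1 + 2) = 2 * 2 ^ (k + 2) := by ring
      linarith
  simp only [Fintype.card_sigma, Fintype.card_prod, Fintype.card_fun, ZMod.card, Fintype.card_fin]
  have := hsum m
  omega

variable {m : ℕ}

def wordSuffix (j : Fin m) (u : Str m) : Fin (m - j) → ZMod 2 := fun i => u ⟨j + i, by omega⟩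

def extendSuffix (j : Fin m) (t : Fin (m - j) → ZMod 2) : Str m :=
  fun k => if h : j ≤ k then t ⟨k - j, by omega⟩ else 0

/-- The `j` letters before the predicted one are the last `j` of the `m - 1` known letters. -/
def alignPrefix (j : Fin m) (v : Fin (m - 1) → ZMod 2) : Str m :=
  fun k => if h : k < j then v ⟨k + (m - 1) - j, by omega⟩ else 0

def predictor (D : Finset (Str m)) : PredictorParam m → (Fin (m - 1) → ZMod 2) → ZMod 2
  | ⟨j, t, s⟩, v => s + nextBitGuess D j (extendSuffix j t) (alignPrefix j v)

lemma predictor_wordSuffix (D : Finset (Str m)) (j : Fin m) (u : Str m) (s : ZMod 2)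
    (v : Fin (m - 1) → ZMod 2) :
    predictor D ⟨j, wordSuffix j u, s⟩ v = s + nextBitGuess D j u (alignPrefix j v) := by
  rw [predictor, nextBitGuess_congr (fun _ _ => rfl)]
  intro k hk
  simp only [extendSuffix, wordSuffix, dif_pos hk]
  congr 2
  omega

end Predictors

lemma fr_predictor_wordSuffix_eq {n ℓ m : ℕ} (X : Str n → Str n) (D : Finset (Str m))
    (j : Fin m) (u : Str m) (s : ZMod 2) :
    fr (fun p : (Fin ℓ → Str n) × (Fin ℓ → Str n) =>
        predictor D ⟨j, wordSuffix j u, s⟩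
            (fun i : Fin (m - 1) => shiftedInnerBit X ((i : ℤ) + 1 - m) p)
          = ipb (fun i => X (p.1 i)) p.2)
      = fr fun p : (Fin ℓ → Str n) × (Fin ℓ → Str n) =>
          s + nextBitGuess D j u (fun k => shiftedInnerBit X k p) = shiftedInnerBit X j p := by
  simp only [← shiftedInnerBit_zero]
  rw [← fr_comp_equiv (shiftBlocks j)]
  refine fr_congr fun p => ?_
  simp only [shiftedInnerBit_shiftBlocks, predictor_wordSuffix, add_zero]
  rw [nextBitGuess_congr (w' := fun k => shiftedInnerBit X k p) (u' := u) _ fun _ _ => rfl]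
  intro k hk
  simp only [alignPrefix, dif_pos hk]
  congr 1
  omega

theorem stmt14_general (n ℓ m : ℕ) (hm : 2 ≤ m) (ε : ℝ)
    (D : Finset (Str m)) :
    ∃ C : Fin (2 ^ (m + 2) - 4) → (Fin (m - 1) → ZMod 2) → ZMod 2,
      ∀ X : Str n → Str n,
        ε < |fr (fun p : (Fin ℓ → Str n) × (Fin ℓ → Str n) =>
                (fun j : Fin m =>
                  ipb (fun i => X (shiftStr n (p.1 i) (j : ℤ))) p.2) ∈ D)
              - (D.card : ℝ) / 2 ^ m| →
        ∃ c : Fin (2 ^ (m + 2) - 4),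
          1 / 2 + ε / m ≤ fr (fun p : (Fin ℓ → Str n) × (Fin ℓ → Str n) =>
            C c (fun j : Fin (m - 1) =>
                ipb (fun i => X (shiftStr n (p.1 i) ((j : ℤ) + 1 - m))) p.2)
              = ipb (fun i => X (p.1 i)) p.2) := by
  have e : Fin (2 ^ (m + 2) - 4) ≃ PredictorParam m :=
    (Fintype.equivFinOfCardEq (card_predictorParam m)).symm
  refine ⟨fun c => predictor D (e c), fun X hX => ?_⟩
  obtain ⟨j, u, s, hadv⟩ :=
    exists_nextBitGuess_advantage (by omega) (fun p k => shiftedInnerBit X k p) D hX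
  refine ⟨e.symm ⟨j, wordSuffix j u, s⟩, ?_⟩
  simp only [Equiv.apply_symm_apply]
  exact hadv.trans_eq (fr_predictor_wordSuffix_eq X D j u s).symm

theorem stmt14 (n ℓ m : ℕ) (hn : 1 ≤ n) (hℓ : 1 ≤ ℓ) (hm : 2 ≤ m) (ε : ℝ) (hε : 0 < ε)
    (D : Finset (Str m)) :
    ∃ C : Fin (2 ^ (m + 2) - 4) → (Fin (m - 1) → ZMod 2) → ZMod 2,
      ∀ X : Str n → Str n,
        ε < |fr (fun p : (Fin ℓ → Str n) × (Fin ℓ → Str n) =>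
                (fun j : Fin m =>
                  ipb (fun i => X (shiftStr n (p.1 i) (j : ℤ))) p.2) ∈ D)
              - (D.card : ℝ) / 2 ^ m| →
        ∃ c : Fin (2 ^ (m + 2) - 4),
          1 / 2 + ε / m ≤ fr (fun p : (Fin ℓ → Str n) × (Fin ℓ → Str n) =>
            C c (fun j : Fin (m - 1) =>
                ipb (fun i => X (shiftStr n (p.1 i) ((j : ℤ) + 1 - m))) p.2)
              = ipb (fun i => X (p.1 i)) p.2) :=
  stmt14_general n ℓ m hm ε D
end
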